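/- Equivalence of the dual SDP and its chordal decomposition. Let G = (V, E) be a chordal graph on V = {1,…,n} with (i,i) ∈ E for all i and maximal cliques C_1, …, C_p. Let C, A_1, …, A_m ∈ S^n all be supported on E, and b ∈ R^m. Then the optimal value (supremum, in the extended reals) of the dual SDP: maximize ⟨b, y⟩ over y ∈ R^m and Z ∈ S^n subject to Σ_{i=1}^m A_i y_i + Z = C and Z positive semidefinite, equals the optimal value of the decomposed problem: maximize ⟨b, y⟩ over y ∈ R^m and Z_k ∈ S^{|C_k|}, k = 1,…,p, subject to Σ_{i=1}^m A_i y_i + Σ_{k=1}^p E_kᵀ Z_k E_k = C and each Z_k positive semidefinite. -/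

import Mathlib

open Matrix Finset

/-- A graph (given by its adjacency relation `Adj`) is chordal if every cycle of
length four or higher (a tuple of pairwise distinct vertices, cyclically
consecutively adjacent) has a chord, i.e. an edge joining two vertices that are
not adjacent in the cycle. -/
def IsChordal {V : Type*} (Adj : V → V → Prop) : Prop :=
  ∀ (k : ℕ) (v : Fin (k + 4) → V), Function.Injective v →
    (∀ i, Adj (v i) (v (i + 1))) →
    ∃ i j, j ≠ i ∧ j ≠ i + 1 ∧ i ≠ j + 1 ∧ Adj (v i) (v j)

/-- A clique: a set of pairwise adjacent vertices. -/
def IsClique {V : Type*} (Adj : V → V → Prop) (s : Finset V) : Prop :=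
  ∀ i ∈ s, ∀ j ∈ s, i ≠ j → Adj i j

/-- A maximal clique: a clique not contained in any strictly larger clique. -/
def IsMaximalClique {V : Type*} (Adj : V → V → Prop) (s : Finset V) : Prop :=
  IsClique Adj s ∧ ∀ t, IsClique Adj t → s ⊆ t → t = s

/-- The selector matrix `E_k` of an index set `s ⊆ {1,…,n}`: the `|s| × n`
matrix with `(E_k)_{ij} = 1` if the `i`-th element of `s` is `j`, else `0`. -/
def selector {n : ℕ} (s : Finset (Fin n)) : Matrix {x // x ∈ s} (Fin n) ℝ :=
  Matrix.of fun i j => if (i : Fin n) = j then 1 else 0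


set_option linter.unusedSectionVars false
set_option linter.unusedVariables false
set_option maxHeartbeats 1000000

section PSD

variable {n : ℕ}

lemma psd_apply {M : Matrix (Fin n) (Fin n) ℝ} (h : M.PosSemidef) (x : Fin n → ℝ) :
    0 ≤ x ⬝ᵥ M.mulVec x := by
  have := h.dotProduct_mulVec_nonneg x; simpa using this

lemma psd_transpose_eq {M : Matrix (Fin n) (Fin n) ℝ} (h : M.PosSemidef) : Mᵀ = M := by
  have := h.1; rwa [Matrix.IsHermitian, Matrix.conjTranspose_eq_transpose_of_trivial] at this

lemma psd_symm_apply {M : Matrix (Fin n) (Fin n) ℝ} (h : M.PosSemidef) (i j : Fin n) :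
    M i j = M j i := by
  conv_lhs => rw [← psd_transpose_eq h]
  simp [Matrix.transpose_apply]

lemma dot_mulVec_comm {M : Matrix (Fin n) (Fin n) ℝ} (h : Mᵀ = M) (x y : Fin n → ℝ) :
    x ⬝ᵥ M.mulVec y = y ⬝ᵥ M.mulVec x := by
  rw [Matrix.dotProduct_mulVec, ← h, Matrix.vecMul_transpose, dotProduct_comm, h]

lemma expand_quad {M : Matrix (Fin n) (Fin n) ℝ} (h : Mᵀ = M) (x y : Fin n → ℝ) (t : ℝ) :
    (x + t • y) ⬝ᵥ M.mulVec (x + t • y) =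
      (y ⬝ᵥ M.mulVec y) * (t * t) + (2 * (y ⬝ᵥ M.mulVec x)) * t + x ⬝ᵥ M.mulVec x := by
  simp only [Matrix.mulVec_add, Matrix.mulVec_smul, add_dotProduct,
    smul_dotProduct, dotProduct_add, dotProduct_smul, smul_eq_mul,
    dot_mulVec_comm h y x]
  ring

lemma psd_cs {M : Matrix (Fin n) (Fin n) ℝ} (h : M.PosSemidef) (x y : Fin n → ℝ) :
    (y ⬝ᵥ M.mulVec x) ^ 2 ≤ (x ⬝ᵥ M.mulVec x) * (y ⬝ᵥ M.mulVec y) := by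
  have hd : discrim (y ⬝ᵥ M.mulVec y) (2 * (y ⬝ᵥ M.mulVec x)) (x ⬝ᵥ M.mulVec x) ≤ 0 := by
    apply discrim_le_zero
    intro t
    have := psd_apply h (x + t • y)
    rwa [expand_quad (psd_transpose_eq h) x y t] at this
  rw [discrim] at hd
  nlinarith [hd]

lemma psd_entry_sq {M : Matrix (Fin n) (Fin n) ℝ} (h : M.PosSemidef) (v j : Fin n) :
    (M v j) ^ 2 ≤ M j j * M v v := by
  have := psd_cs h (Pi.single j (1:ℝ)) (Pi.single v (1:ℝ))
  simpa [Matrix.mulVec_single, single_dotProduct] using this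

lemma psd_diag_nonneg {M : Matrix (Fin n) (Fin n) ℝ} (h : M.PosSemidef) (v : Fin n) :
    0 ≤ M v v := by
  have := psd_apply h (Pi.single v (1:ℝ))
  simpa [Matrix.mulVec_single, single_dotProduct] using this

lemma psd_row_zero {M : Matrix (Fin n) (Fin n) ℝ} (h : M.PosSemidef) {v : Fin n}
    (hv : M v v = 0) (j : Fin n) : M v j = 0 := by
  have := psd_entry_sq h v j
  rw [hv, mul_zero] at this
  nlinarith [this]

end PSD

section Lists
open List

variable {V : Type*} {A : V → V → Prop}

lemma splice {x y : V} {l : List V} (hc : Chain' A (x :: l ++ [y]))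
    (i j : ℕ) (hi : i ≤ l.length) (hj : j ≤ l.length + 1) (hij : i < j)
    (hR : A ((x :: l ++ [y]).getD i x) ((x :: l ++ [y]).getD j x)) :
    Chain' A (x :: (l.take i ++ l.drop (j-1)) ++ [y]) := by
  set F := x :: l ++ [y] with hF
  have hFlen : F.length = l.length + 2 := by simp [hF]
  have htake : F.take (i+1) = x :: l.take i := by
    rw [hF]
    show List.take (i+1) (x :: (l ++ [y])) = _
    rw [List.take_succ_cons, List.take_append]
    simp [Nat.sub_eq_zero_of_le hi]
  have hdrop : F.drop j = l.drop (j-1) ++ [y] := by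
    rw [hF]
    obtain ⟨j', rfl⟩ : ∃ j', j = j' + 1 := ⟨j - 1, by omega⟩
    show List.drop (j'+1) (x :: (l ++ [y])) = _
    rw [List.drop_succ_cons]
    rw [List.drop_append]
    simp [Nat.sub_eq_zero_of_le (by omega : j' ≤ l.length)]
  have hid : x :: (l.take i ++ l.drop (j-1)) ++ [y] = F.take (i+1) ++ F.drop j := by
    rw [htake, hdrop]; simp
  rw [hid]
  unfold List.Chain'
  rw [List.isChain_append]
  refine ⟨hc.prefix (List.take_prefix _ _), hc.suffix (List.drop_suffix _ _), ?_⟩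
  intro u hu w hw
  have hiF : i < F.length := by omega
  have hjF : j < F.length := by omega
  have hu' : u = F[i] := by
    rw [List.getLast?_eq_getElem?] at hu
    have hlen : (F.take (i+1)).length = i + 1 := by
      rw [List.length_take]; omega
    rw [hlen] at hu
    simp only [Nat.add_sub_cancel] at hu
    rw [List.getElem?_eq_getElem (by omega)] at hu
    rw [List.getElem_take] at hu
    exact (Option.some_injective _ hu).symm
  have hw' : w = F[j] := by
    rw [List.head?_drop, List.getElem?_eq_getElem hjF] at hw
    exact (Option.some_injective _ hw).symm
  rw [hu', hw']
  rwa [List.getD_eq_getElem _ _ hiF, List.getD_eq_getElem _ _ hjF] at hR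

lemma chain'_get {l : List V} (hc : Chain' A l) (i : ℕ) (h : i + 1 < l.length) :
    A (l[i]'(by omega)) (l[i+1]'h) := by
  unfold List.Chain' at hc
  rw [List.isChain_iff_getElem] at hc
  exact hc i (by omega)

lemma getF_zero {x y : V} {l : List V} (h : 0 < (x :: l ++ [y]).length) :
    (x :: l ++ [y])[0] = x := rfl

lemma getF_last {x y : V} {l : List V} (h : l.length + 1 < (x :: l ++ [y]).length) :
    (x :: l ++ [y])[l.length+1] = y := by
  simp only [List.cons_append]
  rw [List.getElem_cons_succ, List.getElem_append]
  simp

lemma getF_mid {x y : V} {l : List V} {w : ℕ} (hw : w < l.length)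
    (h : w + 1 < (x :: l ++ [y]).length) : (x :: l ++ [y])[w+1] = l[w] := by
  simp only [List.cons_append]
  rw [List.getElem_cons_succ, List.getElem_append]
  rw [dif_pos hw]

/-- Minimal walk with interior in `S`, as a function interface. -/
lemma exists_min_walk {S : Set V} {x y : V} (hx : x ∉ S) (hy : y ∉ S) (hxy : x ≠ y)
    (hne : ∃ l : List V, (∀ z ∈ l, z ∈ S) ∧ Chain' A (x :: l ++ [y])) :
    ∃ (r : ℕ) (f : ℕ → V), f 0 = x ∧ f (r+1) = y ∧
      (∀ w, 1 ≤ w → w ≤ r → f w ∈ S) ∧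
      (∀ w ≤ r, A (f w) (f (w+1))) ∧
      (∀ i j, i < j → j ≤ r+1 → f i ≠ f j) ∧
      (∀ i j, i+2 ≤ j → j ≤ r+1 → ¬ A (f i) (f j)) := by
  classical
  have hex : ∃ m, ∃ l : List V, l.length = m ∧ (∀ z ∈ l, z ∈ S) ∧ Chain' A (x :: l ++ [y]) := by
    obtain ⟨l, h1, h2⟩ := hne; exact ⟨l.length, l, rfl, h1, h2⟩
  obtain ⟨l, hlen, hmem, hchain⟩ := Nat.find_spec hex
  have hmin : ∀ l' : List V, (∀ z ∈ l', z ∈ S) → Chain' A (x :: l' ++ [y]) →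
      l.length ≤ l'.length := by
    intro l' h1 h2
    rw [hlen]
    exact Nat.find_le ⟨l', rfl, h1, h2⟩
  clear hlen
  set F := x :: l ++ [y] with hF
  have hFlen : F.length = l.length + 2 := by simp [hF]
  refine ⟨l.length, fun w => F.getD w x, ?_, ?_, ?_, ?_, ?_, ?_⟩
  · simp [hF]
  · dsimp only
    have : F.getD (l.length + 1) x = F[l.length + 1]'(by omega) := List.getD_eq_getElem _ _ (by omega)
    rw [this]
    exact getF_last (by simp)
  · -- interior membership
    dsimp only
    intro w h1 h2
    obtain ⟨w', rfl⟩ : ∃ w', w = w' + 1 := ⟨w - 1, by omega⟩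
    have : F.getD (w'+1) x = F[w'+1]'(by omega) := List.getD_eq_getElem _ _ (by omega)
    rw [this]
    have hmid : F[w'+1]'(by omega) = l[w']'(by omega) := getF_mid (by omega) (by simp; omega)
    rw [hmid]
    exact hmem _ (List.getElem_mem _)
  · -- adjacency
    dsimp only
    intro w hw
    have h1 : F.getD w x = F[w]'(by omega) := List.getD_eq_getElem _ _ (by omega)
    have h2 : F.getD (w+1) x = F[w+1]'(by omega) := List.getD_eq_getElem _ _ (by omega)
    rw [h1, h2]
    exact chain'_get hchain w (by omega)
  · -- injectivity
    dsimp only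
    intro i j hij hj hEq
    have hiF : i < F.length := by omega
    have hjF : j < F.length := by omega
    rw [List.getD_eq_getElem _ _ hiF, List.getD_eq_getElem _ _ hjF] at hEq
    -- classify positions: 0 ↦ x, 1..len ↦ l, len+1 ↦ y
    -- if both interior: splice with the chain edge j → j+1
    by_cases hi0 : i = 0
    · subst hi0
      have hx0 : F[(0:ℕ)]'hiF = x := rfl
      by_cases hjl : j = l.length + 1
      · subst hjl
        have hyj : F[l.length+1]'hjF = y := getF_last (by simp)
        rw [hx0, hyj] at hEq; exact hxy hEq
      · have : F[j]'hjF ∈ S := by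
          obtain ⟨j', rfl⟩ : ∃ j', j = j' + 1 := ⟨j - 1, by omega⟩
          have hmid : F[j'+1]'hjF = l[j']'(by omega) := getF_mid (by omega) (by simp; omega)
          rw [hmid]
          exact hmem _ (List.getElem_mem _)
        rw [← hEq, hx0] at this; exact hx this
    · by_cases hjl : j = l.length + 1
      · subst hjl
        have hyj : F[l.length+1]'hjF = y := getF_last (by simp)
        have : F[i]'hiF ∈ S := by
          obtain ⟨i', rfl⟩ : ∃ i', i = i' + 1 := ⟨i - 1, by omega⟩
          have hmid : F[i'+1]'hiF = l[i']'(by omega) := getF_mid (by omega) (by simp; omega)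
          rw [hmid]
          exact hmem _ (List.getElem_mem _)
        rw [hEq, hyj] at this; exact hy this
      · -- both interior: 1 ≤ i < j ≤ l.length
        have hjlen : j ≤ l.length := by omega
        have hadj : A (F.getD i x) (F.getD (j+1) x) := by
          rw [List.getD_eq_getElem _ _ hiF, List.getD_eq_getElem _ _ (by omega : j+1 < F.length)]
          rw [hEq]
          exact chain'_get hchain j (by omega)
        have hc' := splice hchain i (j+1) (by omega) (by omega) (by omega) hadj
        have hmem' : ∀ z ∈ l.take i ++ l.drop (j+1-1), z ∈ S := by
          intro z hz
          rcases List.mem_append.1 hz with h | h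
          · exact hmem _ (List.mem_of_mem_take h)
          · exact hmem _ (List.mem_of_mem_drop h)
        have := hmin _ hmem' hc'
        rw [List.length_append, List.length_take, List.length_drop] at this
        omega
  · -- no chords
    dsimp only
    intro i j hij hj hA'
    have hiF : i < F.length := by omega
    have hjF : j < F.length := by omega
    have hc' := splice hchain i j (by omega) (by omega) (by omega)
      (by rw [List.getD_eq_getElem _ _ hiF, List.getD_eq_getElem _ _ hjF]
          rwa [List.getD_eq_getElem _ _ hiF, List.getD_eq_getElem _ _ hjF] at hA')
    have hmem' : ∀ z ∈ l.take i ++ l.drop (j-1), z ∈ S := by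
      intro z hz
      rcases List.mem_append.1 hz with h | h
      · exact hmem _ (List.mem_of_mem_take h)
      · exact hmem _ (List.mem_of_mem_drop h)
    have := hmin _ hmem' hc'
    rw [List.length_append, List.length_take, List.length_drop] at this
    omega

end Lists

section Cycle

variable {V : Type*} {A : V → V → Prop}

lemma cycle_contradiction (hsym : Symmetric A) (hch : IsChordal A)
    {r t : ℕ} {f g : ℕ → V} (hr : 1 ≤ r) (ht : 1 ≤ t)
    (hg0 : g 0 = f (r+1)) (hgend : g (t+1) = f 0)
    (hfadj : ∀ w ≤ r, A (f w) (f (w+1))) (hgadj : ∀ w ≤ t, A (g w) (g (w+1)))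
    (hfinj : ∀ i j, i < j → j ≤ r+1 → f i ≠ f j)
    (hginj : ∀ i j, i < j → j ≤ t+1 → g i ≠ g j)
    (hfchord : ∀ i j, i+2 ≤ j → j ≤ r+1 → ¬ A (f i) (f j))
    (hgchord : ∀ i j, i+2 ≤ j → j ≤ t+1 → ¬ A (g i) (g j))
    (hdisj : ∀ i j, 1 ≤ i → i ≤ r → 1 ≤ j → j ≤ t → f i ≠ g j ∧ ¬ A (f i) (g j)) :
    False := by
  set L := r + t + 2 with hLdef
  set c : ℕ → V := fun w => if w ≤ r+1 then f w else g (w - (r+1)) with hc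
  have c_le : ∀ w ≤ r+1, c w = f w := fun w hw => if_pos hw
  have c_ge : ∀ w, r+1 ≤ w → c w = g (w - (r+1)) := by
    intro w hw
    rcases eq_or_lt_of_le hw with h | h
    · rw [← h, c_le _ le_rfl, Nat.sub_self, hg0]
    · exact if_neg (by omega)
  -- injectivity of c on [0, L-1]
  have cinj : ∀ a b, a < b → b ≤ L - 1 → c a ≠ c b := by
    intro a b hab hb
    by_cases hbr : b ≤ r + 1
    · rw [c_le a (by omega), c_le b hbr]
      exact hfinj a b hab hbr
    · by_cases har : r + 1 ≤ a
      · rw [c_ge a har, c_ge b (by omega)]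
        exact hginj _ _ (by omega) (by omega)
      · rw [c_le a (by omega), c_ge b (by omega)]
        rcases Nat.eq_zero_or_pos a with rfl | ha1
        · rw [← hgend]
          exact (hginj _ _ (by omega) (by omega)).symm
        · exact (hdisj a (b - (r+1)) ha1 (by omega) (by omega) (by omega)).1
  have hL4 : L = (r + t - 2) + 4 := by omega
  set k := r + t - 2 with hk
  have hLk : k + 4 = L := by omega
  let v : Fin (k+4) → V := fun i => c i.val
  have hvinj : Function.Injective v := by
    intro i j hij
    by_contra hne
    have hne' : i.val ≠ j.val := fun h => hne (Fin.ext h)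
    rcases Nat.lt_or_ge i.val j.val with h | h
    · exact cinj i.val j.val h (by omega) hij
    · exact cinj j.val i.val (by omega) (by omega) hij.symm
  have hval1 : ((1 : Fin (k+4))).val = 1 := rfl
  have hvadd : ∀ i : Fin (k+4), (i + 1).val = (i.val + 1) % (k + 4) := by
    intro i; rw [Fin.val_add, hval1]
  have hvadj : ∀ i : Fin (k+4), A (v i) (v (i + 1)) := by
    intro i
    have hi : i.val < L := by omega
    show A (c i.val) (c ((i+1).val))
    rw [hvadd i]
    by_cases hiL : i.val = L - 1
    · have h1 : (i.val + 1) % (k + 4) = 0 := by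
        have h2 : i.val + 1 = k + 4 := by omega
        rw [h2, Nat.mod_self]
      rw [h1, c_ge i.val (by omega), c_le 0 (by omega), ← hgend]
      have h3 : i.val - (r+1) = t := by omega
      rw [h3]
      exact hgadj t le_rfl
    · have hmod : (i.val + 1) % (k+4) = i.val + 1 := Nat.mod_eq_of_lt (by omega)
      rw [hmod]
      by_cases hir : i.val ≤ r
      · rw [c_le _ (by omega), c_le _ (by omega)]
        exact hfadj _ hir
      · rw [c_ge _ (by omega), c_ge _ (by omega)]
        have : i.val + 1 - (r+1) = (i.val - (r+1)) + 1 := by omega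
        rw [this]
        exact hgadj _ (by omega)
  -- the key non-adjacency of non-consecutive cycle positions
  have key : ∀ a b, a < b → b ≤ L - 1 → b ≠ (a+1) % L → a ≠ (b+1) % L → ¬ A (c a) (c b) := by
    intro a b hab hb hb1 ha1
    have hmoda : (a+1) % L = a + 1 := Nat.mod_eq_of_lt (by omega)
    rw [hmoda] at hb1
    have hab2 : a + 2 ≤ b := by omega
    by_cases hbr : b ≤ r + 1
    · rw [c_le a (by omega), c_le b hbr]
      exact hfchord a b hab2 hbr
    · by_cases har : r + 1 ≤ a
      · rw [c_ge a har, c_ge b (by omega)]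
        exact hgchord _ _ (by omega) (by omega)
      · rcases Nat.eq_zero_or_pos a with rfl | ha2
        · have hbL : b ≠ L - 1 := by
            intro hbL
            apply ha1
            rw [hbL]
            have : (L - 1 + 1) % L = 0 := by
              have : L - 1 + 1 = L := by omega
              rw [this, Nat.mod_self]
            omega
          rw [c_le 0 (by omega), c_ge b (by omega), ← hgend]
          intro hA'
          exact hgchord (b - (r+1)) (t+1) (by omega) le_rfl (hsym hA')
        · rw [c_le a (by omega), c_ge b (by omega)]
          exact (hdisj a (b - (r+1)) ha2 (by omega) (by omega) (by omega)).2
  obtain ⟨i, j, hji, hji1, hij1, hAij⟩ := hch k v hvinj hvadj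
  have hji' : j.val ≠ i.val := fun h => hji (Fin.ext h)
  rcases Nat.lt_or_ge i.val j.val with h | h
  · exact key i.val j.val h (by omega)
      (by rw [← hLk, ← hvadd i]; exact fun hh => hji1 (Fin.ext hh))
      (by rw [← hLk, ← hvadd j]; exact fun hh => hij1 (Fin.ext hh)) hAij
  · exact key j.val i.val (by omega) (by omega)
      (by rw [← hLk, ← hvadd j]; exact fun hh => hij1 (Fin.ext hh))
      (by rw [← hLk, ← hvadd i]; exact fun hh => hji1 (Fin.ext hh)) (hsym hAij)

end Cycle

section Dirac


variable {V : Type*} [Fintype V] [DecidableEq V] {A : V → V → Prop}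

def Reach (A : V → V → Prop) (U : Finset V) (x y : V) : Prop :=
  Relation.ReflTransGen (fun p q => A p q ∧ p ∈ U ∧ q ∈ U) x y

def SimpOn (A : V → V → Prop) (s : Finset V) (v : V) : Prop :=
  v ∈ s ∧ ∀ x ∈ s, ∀ y ∈ s, A v x → A v y → x ≠ y → A x y

def CliqueOn (A : V → V → Prop) (s : Finset V) : Prop :=
  ∀ x ∈ s, ∀ y ∈ s, x ≠ y → A x y

lemma reach_refl {U : Finset V} (x : V) : Reach A U x x := Relation.ReflTransGen.refl

lemma reach_symm (hA : Symmetric A) {U : Finset V} {x y : V} (h : Reach A U x y) :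
    Reach A U y x :=
  (@Relation.ReflTransGen.stdSymm _ _ ⟨fun _ _ hpq => ⟨hA hpq.1, hpq.2.2, hpq.2.1⟩⟩).symm _ _ h

lemma reach_trans {U : Finset V} {x y z : V} (h1 : Reach A U x y) (h2 : Reach A U y z) :
    Reach A U x z := Relation.ReflTransGen.trans h1 h2

lemma reach_mem {U : Finset V} {x y : V} (h : Reach A U x y) (hx : x ∈ U) : y ∈ U := by
  induction h with
  | refl => exact hx
  | tail _ hbc _ => exact hbc.2.2

lemma reach_chain (hA : Symmetric A) {U : Finset V} {u v : V} (h : Reach A U u v) :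
    ∃ l : List V, List.Chain' A (u :: l) ∧ (u :: l).getLast? = some v ∧
      ∀ w ∈ u :: l, Reach A U u w := by
  induction h with
  | refl =>
    exact ⟨[], List.isChain_singleton u, rfl, by
      intro w hw; simp at hw; rw [hw]; exact reach_refl u⟩
  | @tail b c hub hbc ih =>
    obtain ⟨l, hl1, hl2, hl3⟩ := ih
    have hcat : u :: (l ++ [c]) = (u :: l) ++ [c] := by simp
    refine ⟨l ++ [c], ?_, ?_, ?_⟩
    · unfold List.Chain'
      rw [hcat, List.isChain_append]
      refine ⟨hl1, List.isChain_singleton c, ?_⟩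
      intro p hp q hq
      simp at hq; subst hq
      rw [hl2] at hp
      simp at hp; subst hp
      exact hbc.1
    · rw [hcat, List.getLast?_concat]
    · intro w hw
      rw [hcat, List.mem_append] at hw
      rcases hw with hw | hw
      · exact hl3 w hw
      · simp at hw; subst hw
        exact Relation.ReflTransGen.tail hub hbc

theorem dirac (hA : Symmetric A) (hirr : ∀ x, ¬ A x x) (hch : IsChordal A)
    (cycle_contradiction : ∀ {r t : ℕ} {f g : ℕ → V}, 1 ≤ r → 1 ≤ t →
      g 0 = f (r+1) → g (t+1) = f 0 →
      (∀ w ≤ r, A (f w) (f (w+1))) → (∀ w ≤ t, A (g w) (g (w+1))) →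
      (∀ i j, i < j → j ≤ r+1 → f i ≠ f j) → (∀ i j, i < j → j ≤ t+1 → g i ≠ g j) →
      (∀ i j, i+2 ≤ j → j ≤ r+1 → ¬ A (f i) (f j)) →
      (∀ i j, i+2 ≤ j → j ≤ t+1 → ¬ A (g i) (g j)) →
      (∀ i j, 1 ≤ i → i ≤ r → 1 ≤ j → j ≤ t → f i ≠ g j ∧ ¬ A (f i) (g j)) → False)
    (exists_min_walk : ∀ {S : Set V} {x y : V}, x ∉ S → y ∉ S → x ≠ y →
      (∃ l : List V, (∀ z ∈ l, z ∈ S) ∧ List.Chain' A (x :: l ++ [y])) →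
      ∃ (r : ℕ) (f : ℕ → V), f 0 = x ∧ f (r+1) = y ∧
        (∀ w, 1 ≤ w → w ≤ r → f w ∈ S) ∧
        (∀ w ≤ r, A (f w) (f (w+1))) ∧
        (∀ i j, i < j → j ≤ r+1 → f i ≠ f j) ∧
        (∀ i j, i+2 ≤ j → j ≤ r+1 → ¬ A (f i) (f j))) :
    ∀ s : Finset V, s.Nonempty →
      CliqueOn A s ∨
        ∃ u ∈ s, ∃ w ∈ s, u ≠ w ∧ ¬ A u w ∧ SimpOn A s u ∧ SimpOn A s w := by
  intro s
  induction s using Finset.strongInductionOn with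
  | _ s IH =>
  intro hs
  by_cases hclique : CliqueOn A s
  · exact Or.inl hclique
  right
  have hpair : ∃ a ∈ s, ∃ b ∈ s, a ≠ b ∧ ¬ A a b := by
    unfold CliqueOn at hclique
    push_neg at hclique
    obtain ⟨x, hx, y, hy, hne, hn⟩ := hclique
    exact ⟨x, hx, y, hy, hne, hn⟩
  obtain ⟨a, has, b, hbs, hab, hnadj⟩ := hpair
  classical
  set Sep : Finset V → Prop := fun T => T ⊆ s ∧ a ∉ T ∧ b ∉ T ∧ ¬ Reach A (s \ T) a b
    with hSepDef
  have hSep0 : Sep (s \ {a, b}) := by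
    refine ⟨Finset.sdiff_subset, by simp [has], by simp [hbs], ?_⟩
    rw [sdiff_sdiff_right_self, Finset.inf_eq_inter]
    intro hR
    have hza : ∀ z, Reach A (s ∩ {a, b}) a z → z = a := by
      intro z hz
      induction hz with
      | refl => rfl
      | @tail p q hap hpq ihp =>
        have hq : q ∈ s ∩ ({a, b} : Finset V) := hpq.2.2
        rw [Finset.mem_inter, Finset.mem_insert, Finset.mem_singleton] at hq
        rcases hq.2 with rfl | rfl
        · rfl
        · rw [ihp] at hpq
          exact absurd hpq.1 hnadj
    exact hab (hza b hR).symm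
  obtain ⟨T, hTmem, hTmin⟩ :=
    Finset.exists_min_image (Finset.univ.filter Sep) Finset.card
      ⟨s \ {a, b}, Finset.mem_filter.2 ⟨Finset.mem_univ _, hSep0⟩⟩
  have hT : Sep T := (Finset.mem_filter.1 hTmem).2
  obtain ⟨hTs, haT, hbT, hTsep⟩ := hT
  set U := s \ T with hU
  have haU : a ∈ U := Finset.mem_sdiff.2 ⟨has, haT⟩
  have hbU : b ∈ U := Finset.mem_sdiff.2 ⟨hbs, hbT⟩
  set Acomp := U.filter (Reach A U a) with hAcomp
  set Bcomp := U.filter (Reach A U b) with hBcomp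
  have haA : a ∈ Acomp := Finset.mem_filter.2 ⟨haU, reach_refl a⟩
  have hbB : b ∈ Bcomp := Finset.mem_filter.2 ⟨hbU, reach_refl b⟩
  have hdisjAB : ∀ z, z ∈ Acomp → z ∈ Bcomp → False := by
    intro z hz1 hz2
    exact hTsep (reach_trans (Finset.mem_filter.1 hz1).2
      (reach_symm hA (Finset.mem_filter.1 hz2).2))
  have hedgeAB : ∀ u ∈ Acomp, ∀ w ∈ Bcomp, ¬ A u w := by
    intro u hu w hw hAuw
    apply hdisjAB w _ hw
    refine Finset.mem_filter.2 ⟨(Finset.mem_filter.1 hw).1, ?_⟩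
    exact Relation.ReflTransGen.tail (Finset.mem_filter.1 hu).2
      ⟨hAuw, (Finset.mem_filter.1 hu).1, (Finset.mem_filter.1 hw).1⟩
  -- growth lemma for minimality
  have compGrow : ∀ (rt : V), rt ∈ U → ∀ (x : V), x ∈ T →
      (∀ u ∈ U.filter (Reach A U rt), ¬ A x u) →
      ∀ z, Reach A (s \ T.erase x) rt z → Reach A U rt z := by
    intro rt hrtU x hxT hno z hz
    induction hz with
    | refl => exact reach_refl rt
    | @tail p q hrp hpq ihp =>
      have hpU : p ∈ U := reach_mem ihp hrtU
      have hqx : q ≠ x := by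
        intro hqx
        subst hqx
        exact hno p (Finset.mem_filter.2 ⟨hpU, ihp⟩) (hA hpq.1)
      have hqU : q ∈ U := by
        have hq : q ∈ s \ T.erase x := hpq.2.2
        rw [Finset.mem_sdiff] at hq
        refine Finset.mem_sdiff.2 ⟨hq.1, ?_⟩
        intro hqT
        exact hq.2 (Finset.mem_erase.2 ⟨hqx, hqT⟩)
      exact Relation.ReflTransGen.tail ihp ⟨hpq.1, hpU, hqU⟩
  have hTnbrA : ∀ x ∈ T, ∃ u ∈ Acomp, A x u := by
    intro x hxT
    by_contra hno
    push_neg at hno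
    have hSepT' : Sep (T.erase x) := by
      refine ⟨(Finset.erase_subset _ _).trans hTs,
        fun h => haT (Finset.mem_of_mem_erase h),
        fun h => hbT (Finset.mem_of_mem_erase h), ?_⟩
      intro hR
      exact hTsep (compGrow a haU x hxT (fun u hu hAxu => hno u hu hAxu) b hR)
    have := hTmin (T.erase x) (Finset.mem_filter.2 ⟨Finset.mem_univ _, hSepT'⟩)
    rw [Finset.card_erase_of_mem hxT] at this
    have hpos : 0 < T.card := Finset.card_pos.2 ⟨x, hxT⟩
    omega
  have hTnbrB : ∀ x ∈ T, ∃ u ∈ Bcomp, A x u := by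
    intro x hxT
    by_contra hno
    push_neg at hno
    have hSepT' : Sep (T.erase x) := by
      refine ⟨(Finset.erase_subset _ _).trans hTs,
        fun h => haT (Finset.mem_of_mem_erase h),
        fun h => hbT (Finset.mem_of_mem_erase h), ?_⟩
      intro hR
      have hR' : Reach A (s \ T.erase x) b a := reach_symm hA hR
      exact hTsep (reach_symm hA
        (compGrow b hbU x hxT (fun u hu hAxu => hno u hu hAxu) a hR'))
    have := hTmin (T.erase x) (Finset.mem_filter.2 ⟨Finset.mem_univ _, hSepT'⟩)
    rw [Finset.card_erase_of_mem hxT] at this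
    have hpos : 0 < T.card := Finset.card_pos.2 ⟨x, hxT⟩
    omega
  -- T is a clique
  have hTclique : ∀ x ∈ T, ∀ y ∈ T, x ≠ y → A x y := by
    intro x hxT y hyT hxy
    by_contra hnxy
    have hwalk : ∀ (root : V), root ∈ U →
        ∀ (comp : Finset V), comp = U.filter (Reach A U root) →
        (∃ u ∈ comp, A x u) → (∃ w ∈ comp, A y w) →
        ∃ l : List V, (∀ z ∈ l, z ∈ (↑comp : Set V)) ∧ List.Chain' A (x :: l ++ [y]) := by
      intro root hrootU comp hcompdef hxu hyw
      obtain ⟨u, hu, hAxu⟩ := hxu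
      obtain ⟨w, hw, hAyw⟩ := hyw
      subst hcompdef
      have hru : Reach A U root u := (Finset.mem_filter.1 hu).2
      have hrw : Reach A U root w := (Finset.mem_filter.1 hw).2
      have huw : Reach A U u w := reach_trans (reach_symm hA hru) hrw
      obtain ⟨l, hl1, hl2, hl3⟩ := reach_chain hA huw
      refine ⟨u :: l, ?_, ?_⟩
      · intro z hz
        have hz' : Reach A U u z := hl3 z hz
        have hrz : Reach A U root z := reach_trans hru hz'
        have hzU : z ∈ U := reach_mem hz' (Finset.mem_filter.1 hu).1
        rw [Finset.mem_coe]
        exact Finset.mem_filter.2 ⟨hzU, hrz⟩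
      · have heq : x :: (u :: l) ++ [y] = x :: ((u :: l) ++ [y]) := by simp
        unfold List.Chain'
        rw [heq, List.isChain_cons]
        constructor
        · intro z hz
          rw [List.head?_append_of_ne_nil _ (by simp)] at hz
          simp at hz
          subst hz
          exact hAxu
        · rw [List.isChain_append]
          refine ⟨hl1, List.isChain_singleton y, ?_⟩
          intro p hp q hq
          simp at hq; subst hq
          rw [hl2] at hp
          simp at hp; subst hp
          exact hA hAyw
    obtain ⟨uA, huA, hAxuA⟩ := hTnbrA x hxT
    obtain ⟨wA, hwA, hAywA⟩ := hTnbrA y hyT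
    obtain ⟨uB, huB, hAxuB⟩ := hTnbrB x hxT
    obtain ⟨wB, hwB, hAywB⟩ := hTnbrB y hyT
    obtain ⟨lA, hlA1, hlA2⟩ := hwalk a haU Acomp rfl ⟨uA, huA, hAxuA⟩ ⟨wA, hwA, hAywA⟩
    obtain ⟨lB, hlB1, hlB2⟩ := hwalk b hbU Bcomp rfl ⟨uB, huB, hAxuB⟩ ⟨wB, hwB, hAywB⟩
    have hnotinA : ∀ z ∈ T, z ∉ (↑Acomp : Set V) := by
      intro z hzT hzA
      rw [Finset.mem_coe, hAcomp, Finset.mem_filter, hU, Finset.mem_sdiff] at hzA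
      exact hzA.1.2 hzT
    have hnotinB : ∀ z ∈ T, z ∉ (↑Bcomp : Set V) := by
      intro z hzT hzB
      rw [Finset.mem_coe, hBcomp, Finset.mem_filter, hU, Finset.mem_sdiff] at hzB
      exact hzB.1.2 hzT
    obtain ⟨r, f, hf0, hf1, hfS, hfadj, hfinj, hfchord⟩ :=
      exists_min_walk (hnotinA x hxT) (hnotinA y hyT) hxy ⟨lA, hlA1, hlA2⟩
    have hlB2' : List.Chain' A (y :: lB.reverse ++ [x]) := by
      have hrev : List.Chain' (flip A) (x :: lB ++ [y]) := hlB2.imp fun _ _ h => hA h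
      have hrev2 : List.Chain' A (x :: lB ++ [y]).reverse := List.isChain_reverse.2 hrev
      have hre : (x :: lB ++ [y]).reverse = y :: lB.reverse ++ [x] := by simp
      rwa [hre] at hrev2
    have hlB1' : ∀ z ∈ lB.reverse, z ∈ (↑Bcomp : Set V) := by
      intro z hz
      exact hlB1 z (List.mem_reverse.1 hz)
    obtain ⟨t, g, hg0, hg1, hgS, hgadj, hginj, hgchord⟩ :=
      exists_min_walk (hnotinB y hyT) (hnotinB x hxT) (Ne.symm hxy) ⟨lB.reverse, hlB1', hlB2'⟩
    have hr : 1 ≤ r := by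
      by_contra h
      have hr0 : r = 0 := by omega
      subst hr0
      have := hfadj 0 (le_refl 0)
      rw [hf0] at this
      rw [show (0:ℕ)+1 = 0+1 from rfl] at this
      rw [show f (0+1) = y from hf1] at this
      exact hnxy this
    have ht : 1 ≤ t := by
      by_contra h
      have ht0 : t = 0 := by omega
      subst ht0
      have := hgadj 0 (le_refl 0)
      rw [hg0] at this
      rw [show g (0+1) = x from hg1] at this
      exact hnxy (hA this)
    refine cycle_contradiction hr ht (by rw [hg0, hf1]) (by rw [hg1, hf0])
      hfadj hgadj hfinj hginj hfchord hgchord ?_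
    intro i j hi1 hi2 hj1 hj2
    have hfi : f i ∈ Acomp := Finset.mem_coe.1 (hfS i hi1 hi2)
    have hgj : g j ∈ Bcomp := Finset.mem_coe.1 (hgS j hj1 hj2)
    exact ⟨fun h => hdisjAB (f i) hfi (h ▸ hgj), hedgeAB _ hfi _ hgj⟩
  -- find a simplicial vertex in each component
  have side : ∀ (root other : V), root ∈ U → other ∈ U → ¬ Reach A U root other →
      ∃ u, u ∈ U.filter (Reach A U root) ∧ SimpOn A s u := by
    intro root other hrootU hotherU hnreach
    set comp := U.filter (Reach A U root) with hcompdef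
    have hrootC : root ∈ comp := Finset.mem_filter.2 ⟨hrootU, reach_refl root⟩
    have hclose : ∀ u ∈ comp, ∀ z ∈ s, A u z → z ∈ T ∨ z ∈ comp := by
      intro u hu z hz hAuz
      by_cases hzT : z ∈ T
      · exact Or.inl hzT
      · right
        have hzU : z ∈ U := Finset.mem_sdiff.2 ⟨hz, hzT⟩
        refine Finset.mem_filter.2 ⟨hzU, ?_⟩
        exact Relation.ReflTransGen.tail (Finset.mem_filter.1 hu).2
          ⟨hAuz, (Finset.mem_filter.1 hu).1, hzU⟩
    set sA := comp ∪ T with hsAdef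
    have hsub : sA ⊆ s := by
      intro z hz
      rcases Finset.mem_union.1 hz with h | h
      · exact (Finset.mem_sdiff.1 (Finset.mem_filter.1 h).1).1
      · exact hTs h
    have hproper : sA ⊂ s := by
      refine (Finset.ssubset_iff_of_subset hsub).2 ⟨other, ?_, ?_⟩
      · exact (Finset.mem_sdiff.1 hotherU).1
      · intro hother
        rcases Finset.mem_union.1 hother with h | h
        · exact hnreach (Finset.mem_filter.1 h).2
        · exact (Finset.mem_sdiff.1 hotherU).2 h
    have hnonempty : sA.Nonempty := ⟨root, Finset.mem_union.2 (Or.inl hrootC)⟩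
    have hget : ∃ u, u ∈ comp ∧ SimpOn A sA u := by
      rcases IH sA hproper hnonempty with hcl | ⟨u1, hu1, u2, hu2, hne12, hnadj12, hs1, hs2⟩
      · exact ⟨root, hrootC, Finset.mem_union.2 (Or.inl hrootC),
          fun x hx y hy _ _ hxy => hcl x hx y hy hxy⟩
      · rcases Finset.mem_union.1 hu1 with h1 | h1
        · exact ⟨u1, h1, hs1⟩
        · rcases Finset.mem_union.1 hu2 with h2 | h2
          · exact ⟨u2, h2, hs2⟩
          · exact absurd (hTclique u1 h1 u2 h2 hne12) hnadj12
    obtain ⟨u, huC, huSimp⟩ := hget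
    refine ⟨u, huC, hsub huSimp.1, ?_⟩
    intro x hx y hy hux huy hxy
    have hxA : x ∈ sA := by
      rcases hclose u huC x hx hux with h | h
      · exact Finset.mem_union.2 (Or.inr h)
      · exact Finset.mem_union.2 (Or.inl h)
    have hyA : y ∈ sA := by
      rcases hclose u huC y hy huy with h | h
      · exact Finset.mem_union.2 (Or.inr h)
      · exact Finset.mem_union.2 (Or.inl h)
    exact huSimp.2 x hxA y hyA hux huy hxy
  obtain ⟨uA, huA, hsimpA⟩ := side a b haU hbU hTsep
  obtain ⟨uB, huB, hsimpB⟩ := side b a hbU haU (fun h => hTsep (reach_symm hA h))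
  refine ⟨uA, hsimpA.1, uB, hsimpB.1, ?_, hedgeAB uA huA uB huB, hsimpA, hsimpB⟩
  intro h
  exact hdisjAB uA huA (h ▸ huB)

theorem exists_simplicial (hA : Symmetric A) (hirr : ∀ x, ¬ A x x) (hch : IsChordal A)
    (cycle_contradiction : ∀ {r t : ℕ} {f g : ℕ → V}, 1 ≤ r → 1 ≤ t →
      g 0 = f (r+1) → g (t+1) = f 0 →
      (∀ w ≤ r, A (f w) (f (w+1))) → (∀ w ≤ t, A (g w) (g (w+1))) →
      (∀ i j, i < j → j ≤ r+1 → f i ≠ f j) → (∀ i j, i < j → j ≤ t+1 → g i ≠ g j) →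
      (∀ i j, i+2 ≤ j → j ≤ r+1 → ¬ A (f i) (f j)) →
      (∀ i j, i+2 ≤ j → j ≤ t+1 → ¬ A (g i) (g j)) →
      (∀ i j, 1 ≤ i → i ≤ r → 1 ≤ j → j ≤ t → f i ≠ g j ∧ ¬ A (f i) (g j)) → False)
    (exists_min_walk : ∀ {S : Set V} {x y : V}, x ∉ S → y ∉ S → x ≠ y →
      (∃ l : List V, (∀ z ∈ l, z ∈ S) ∧ List.Chain' A (x :: l ++ [y])) →
      ∃ (r : ℕ) (f : ℕ → V), f 0 = x ∧ f (r+1) = y ∧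
        (∀ w, 1 ≤ w → w ≤ r → f w ∈ S) ∧
        (∀ w ≤ r, A (f w) (f (w+1))) ∧
        (∀ i j, i < j → j ≤ r+1 → f i ≠ f j) ∧
        (∀ i j, i+2 ≤ j → j ≤ r+1 → ¬ A (f i) (f j)))
    (s : Finset V) (hs : s.Nonempty) : ∃ v, SimpOn A s v := by
  rcases dirac hA hirr hch (fun {r t f g} => cycle_contradiction)
      (fun {S x y} => exists_min_walk) s hs with
    hcl | ⟨u, _, _, _, _, _, hsimp, _⟩
  · obtain ⟨v, hv⟩ := hs
    exact ⟨v, hv, fun x hx y hy _ _ hxy => hcl x hx y hy hxy⟩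
  · exact ⟨u, hsimp⟩

end Dirac

section Decomp
section Selector

variable {n : ℕ}

lemma sum_subtype_eq {s : Finset (Fin n)} (f : {x // x ∈ s} → ℝ) (i : Fin n) :
    (∑ a : {x // x ∈ s}, if (a : Fin n) = i then f a else 0) =
      if h : i ∈ s then f ⟨i, h⟩ else 0 := by
  classical
  by_cases h : i ∈ s
  · rw [dif_pos h]
    rw [Fintype.sum_eq_single (⟨i, h⟩ : {x // x ∈ s})]
    · rw [if_pos rfl]
    · intro b hb
      rw [if_neg]
      intro hbi
      exact hb (Subtype.ext hbi)
  · rw [dif_neg h]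
    apply Finset.sum_eq_zero
    intro b _
    rw [if_neg]
    intro hbi
    exact h (hbi ▸ b.2)

lemma selector_conj_apply {s : Finset (Fin n)} (W : Matrix {x // x ∈ s} {x // x ∈ s} ℝ)
    (i j : Fin n) :
    ((selector s)ᵀ * W * selector s) i j =
      if h : i ∈ s then (if h' : j ∈ s then W ⟨i, h⟩ ⟨j, h'⟩ else 0) else 0 := by
  classical
  have step1 : ((selector s)ᵀ * W * selector s) i j =
      ∑ b : {x // x ∈ s}, (if (b : Fin n) = j then (∑ a : {x // x ∈ s},
        (if (a : Fin n) = i then W a b else 0)) else 0) := by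
    rw [Matrix.mul_apply]
    apply Finset.sum_congr rfl
    intro b _
    rw [Matrix.mul_apply]
    simp only [Matrix.transpose_apply, selector, Matrix.of_apply, ite_mul, one_mul, zero_mul,
      mul_ite, mul_one, mul_zero]
  rw [step1]
  have step2 : ∀ b : {x // x ∈ s}, (∑ a : {x // x ∈ s},
      (if (a : Fin n) = i then W a b else 0)) = if h : i ∈ s then W ⟨i, h⟩ b else 0 :=
    fun b => sum_subtype_eq (fun a => W a b) i
  simp only [step2]
  by_cases h : i ∈ s
  · simp only [dif_pos h]
    exact sum_subtype_eq (fun b => W ⟨i, h⟩ b) j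
  · simp only [dif_neg h]
    simp

lemma sel_sandwich_apply {s : Finset (Fin n)} (Z : Matrix (Fin n) (Fin n) ℝ)
    (a b : {x // x ∈ s}) :
    (selector s * Z * (selector s)ᵀ) a b = Z a b := by
  classical
  have h1 : ∀ c : Fin n, (selector s * Z) a c = Z a c := by
    intro c
    rw [Matrix.mul_apply]
    have hterm : ∀ k, selector s a k * Z k c = if (a : Fin n) = k then Z k c else 0 := by
      intro k
      by_cases h : (a : Fin n) = k <;> simp [selector, h]
    rw [Finset.sum_congr rfl (fun k _ => hterm k),
      Finset.sum_ite_eq Finset.univ ((a : Fin n)) (fun k => Z k c), if_pos (Finset.mem_univ _)]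
  rw [Matrix.mul_apply]
  have hterm : ∀ c, (selector s * Z) a c * (selector s)ᵀ c b =
      if (b : Fin n) = c then (selector s * Z) a c else 0 := by
    intro c
    rw [Matrix.transpose_apply]
    by_cases h : (b : Fin n) = c <;> simp [selector, h]
  rw [Finset.sum_congr rfl (fun c _ => hterm c),
    Finset.sum_ite_eq Finset.univ ((b : Fin n)) (fun c => (selector s * Z) a c),
    if_pos (Finset.mem_univ _), h1]

lemma selector_conjTranspose {s : Finset (Fin n)} : (selector s)ᴴ = (selector s)ᵀ :=
  Matrix.conjTranspose_eq_transpose_of_trivial _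

lemma psd_selector_conj {s : Finset (Fin n)} {W : Matrix {x // x ∈ s} {x // x ∈ s} ℝ}
    (hW : W.PosSemidef) : ((selector s)ᵀ * W * selector s).PosSemidef := by
  rw [← selector_conjTranspose]
  exact hW.conjTranspose_mul_mul_same (selector s)

lemma psd_sel_sandwich {s : Finset (Fin n)} {Z : Matrix (Fin n) (Fin n) ℝ}
    (hZ : Z.PosSemidef) : (selector s * Z * (selector s)ᵀ).PosSemidef := by
  rw [← selector_conjTranspose]
  exact hZ.mul_mul_conjTranspose_same (selector s)

lemma selector_reconstruct {s : Finset (Fin n)} {Z : Matrix (Fin n) (Fin n) ℝ}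
    (hsupp : ∀ i j, Z i j ≠ 0 → i ∈ s ∧ j ∈ s) :
    (selector s)ᵀ * (selector s * Z * (selector s)ᵀ) * selector s = Z := by
  ext i j
  rw [selector_conj_apply]
  by_cases h : i ∈ s
  · rw [dif_pos h]
    by_cases h' : j ∈ s
    · rw [dif_pos h', sel_sandwich_apply]
    · rw [dif_neg h']
      by_contra hne
      exact h' (hsupp i j (fun hz => hne hz.symm)).2
  · rw [dif_neg h]
    by_contra hne
    exact h (hsupp i j (fun hz => hne hz.symm)).1

end Selector

lemma exists_max_clique {n p : ℕ} {E : Fin n → Fin n → Prop} {C : Fin p → Finset (Fin n)}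
    (hmax : ∀ s, IsMaximalClique E s ↔ ∃ k, C k = s) {K : Finset (Fin n)}
    (hK : IsClique E K) : ∃ k, K ⊆ C k := by
  classical
  obtain ⟨t, ht, htmax⟩ := Finset.exists_max_image
    ((Finset.univ : Finset (Finset (Fin n))).filter (fun t => IsClique E t ∧ K ⊆ t))
    Finset.card ⟨K, Finset.mem_filter.2 ⟨Finset.mem_univ _, hK, subset_rfl⟩⟩
  have ht' := (Finset.mem_filter.1 ht).2
  have hM : IsMaximalClique E t := by
    refine ⟨ht'.1, fun t' hct' hsub => ?_⟩
    have ht'' : t' ∈ (Finset.univ : Finset (Finset (Fin n))).filter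
        (fun u => IsClique E u ∧ K ⊆ u) :=
      Finset.mem_filter.2 ⟨Finset.mem_univ _, hct', ht'.2.trans hsub⟩
    exact (Finset.eq_of_subset_of_card_le hsub (htmax t' ht'')).symm
  obtain ⟨k, hk⟩ := (hmax t).1 hM
  exact ⟨k, hk ▸ ht'.2⟩

lemma dot_vecMulVec_mulVec {n : ℕ} (u w x : Fin n → ℝ) :
    x ⬝ᵥ (Matrix.vecMulVec u w).mulVec x = (x ⬝ᵥ u) * (w ⬝ᵥ x) := by
  simp only [Matrix.vecMulVec, Matrix.mulVec, dotProduct, Matrix.of_apply]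
  rw [Finset.sum_mul]
  apply Finset.sum_congr rfl
  intro i _
  rw [Finset.mul_sum, Finset.mul_sum]
  apply Finset.sum_congr rfl
  intro j _
  ring

theorem decomp {n p : ℕ} {E : Fin n → Fin n → Prop} (hsym : Symmetric E) (hrefl : ∀ i, E i i)
    {C : Fin p → Finset (Fin n)} (hmax : ∀ s, IsMaximalClique E s ↔ ∃ k, C k = s)
    (hsimp : ∀ s : Finset (Fin n), s.Nonempty →
      ∃ v, SimpOn (fun x y => E x y ∧ x ≠ y) s v) :
    ∀ s : Finset (Fin n), ∀ Z : Matrix (Fin n) (Fin n) ℝ, Z.PosSemidef →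
      (∀ i j, Z i j ≠ 0 → i ∈ s ∧ j ∈ s ∧ E i j) →
      ∃ W : (k : Fin p) → Matrix {x // x ∈ C k} {x // x ∈ C k} ℝ,
        (∀ k, (W k).PosSemidef) ∧
        (∑ k, (selector (C k))ᵀ * W k * selector (C k)) = Z := by
  intro s
  induction s using Finset.strongInductionOn with
  | _ s IH =>
  intro Z hZ hsupp
  classical
  by_cases hZ0 : Z = 0
  · refine ⟨0, fun k => Matrix.PosSemidef.zero, ?_⟩
    subst hZ0
    apply Finset.sum_eq_zero
    intro k _
    simp [Pi.zero_apply]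
  have hex : ∃ i j, Z i j ≠ 0 := by
    by_contra h
    push_neg at h
    exact hZ0 (Matrix.ext fun i j => h i j)
  obtain ⟨i₀, j₀, hij₀⟩ := hex
  have hne : s.Nonempty := ⟨i₀, (hsupp _ _ hij₀).1⟩
  obtain ⟨v, hvs, hvsimp⟩ := hsimp s hne
  by_cases hrow : ∀ j, Z v j = 0
  · -- recurse directly on s.erase v
    apply IH (s.erase v) (Finset.erase_ssubset hvs) Z hZ
    intro i j hij
    obtain ⟨his, hjs, hEij⟩ := hsupp i j hij
    refine ⟨Finset.mem_erase.2 ⟨?_, his⟩, Finset.mem_erase.2 ⟨?_, hjs⟩, hEij⟩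
    · intro h; subst h; exact hij (hrow j)
    · intro h; subst h; exact hij (by rw [psd_symm_apply hZ]; exact hrow i)
  · push_neg at hrow
    obtain ⟨jw, hjw⟩ := hrow
    have hvv : Z v v ≠ 0 := fun h => hjw (psd_row_zero hZ h jw)
    have hvvpos : 0 < Z v v := lt_of_le_of_ne (psd_diag_nonneg hZ v) (Ne.symm hvv)
    set u : Fin n → ℝ := fun j => Z v j with hu
    set Z1 : Matrix (Fin n) (Fin n) ℝ := (Z v v)⁻¹ • Matrix.vecMulVec u u with hZ1
    set Z2 : Matrix (Fin n) (Fin n) ℝ := Z - Z1 with hZ2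
    have hZ1app : ∀ i j, Z1 i j = (Z v v)⁻¹ * (Z v i * Z v j) := by
      intro i j
      rw [hZ1]
      simp [Matrix.vecMulVec, hu]
    have hZ2app : ∀ i j, Z2 i j = Z i j - (Z v v)⁻¹ * (Z v i * Z v j) := by
      intro i j
      rw [hZ2, Matrix.sub_apply, hZ1app]
    -- quadratic forms
    have hq1 : ∀ x, x ⬝ᵥ Z1.mulVec x = (Z v v)⁻¹ * (u ⬝ᵥ x)^2 := by
      intro x
      rw [hZ1, Matrix.smul_mulVec, dotProduct_smul, dot_vecMulVec_mulVec]
      rw [smul_eq_mul, dotProduct_comm x u]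
      ring
    have hCS : ∀ x, (u ⬝ᵥ x)^2 ≤ (x ⬝ᵥ Z.mulVec x) * Z v v := by
      intro x
      have := psd_cs hZ x (Pi.single v (1:ℝ))
      have h1 : (Pi.single v (1:ℝ)) ⬝ᵥ Z.mulVec x = u ⬝ᵥ x := by
        rw [single_dotProduct]
        simp [Matrix.mulVec, dotProduct, hu]
      have h2 : (Pi.single v (1:ℝ)) ⬝ᵥ Z.mulVec (Pi.single v (1:ℝ)) = Z v v := by
        simp [Matrix.mulVec_single, single_dotProduct]
      rwa [h1, h2] at this
    have hZ1herm : Z1.IsHermitian := by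
      rw [Matrix.IsHermitian]
      ext i j
      rw [Matrix.conjTranspose_apply]
      simp only [star_trivial]
      rw [hZ1app, hZ1app]
      ring
    have hZ1psd : Z1.PosSemidef := by
      refine Matrix.PosSemidef.of_dotProduct_mulVec_nonneg hZ1herm (fun x => ?_)
      have : (star x : Fin n → ℝ) = x := by simp
      rw [this, hq1]
      have h1 : (0:ℝ) ≤ (Z v v)⁻¹ := le_of_lt (inv_pos.2 hvvpos)
      positivity
    have hZ2psd : Z2.PosSemidef := by
      refine Matrix.PosSemidef.of_dotProduct_mulVec_nonneg (Matrix.IsHermitian.sub hZ.1 hZ1herm) (fun x => ?_)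
      have hx : (star x : Fin n → ℝ) = x := by simp
      rw [hx, hZ2, Matrix.sub_mulVec, dotProduct_sub, hq1]
      have := hCS x
      have h2 : (Z v v)⁻¹ * (u ⬝ᵥ x)^2 ≤ x ⬝ᵥ Z.mulVec x := by
        rw [inv_mul_le_iff₀ hvvpos]
        calc (u ⬝ᵥ x)^2 ≤ (x ⬝ᵥ Z.mulVec x) * Z v v := this
        _ = Z v v * (x ⬝ᵥ Z.mulVec x) := by ring
      linarith
    have hZ2vrow : ∀ j, Z2 v j = 0 := by
      intro j
      rw [hZ2app, inv_mul_cancel_left₀ hvv, sub_self]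
    have hZ2vcol : ∀ i, Z2 i v = 0 := by
      intro i
      rw [hZ2app, mul_comm (Z v i) (Z v v), inv_mul_cancel_left₀ hvv,
        psd_symm_apply hZ i v, sub_self]
    -- the clique of v's neighbourhood
    set K := s.filter (fun x => E v x) with hK
    have hvK : v ∈ K := Finset.mem_filter.2 ⟨hvs, hrefl v⟩
    have hKclique : IsClique E K := by
      intro x hx y hy hxy
      obtain ⟨hxs, hEvx⟩ := Finset.mem_filter.1 hx
      obtain ⟨hys, hEvy⟩ := Finset.mem_filter.1 hy
      by_cases hxv : x = v
      · subst hxv; exact hEvy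
      · by_cases hyv : y = v
        · subst hyv; exact hsym hEvx
        · exact (hvsimp x hxs y hys ⟨hEvx, fun h => hxv h.symm⟩
            ⟨hEvy, fun h => hyv h.symm⟩ hxy).1
    obtain ⟨k₀, hk₀⟩ := exists_max_clique hmax hKclique
    -- support of Z1
    have hZ1supp : ∀ i j, Z1 i j ≠ 0 → i ∈ K ∧ j ∈ K := by
      intro i j hij
      rw [hZ1app] at hij
      have hiv : Z v i ≠ 0 := fun h => hij (by rw [h]; ring)
      have hvj : Z v j ≠ 0 := fun h => hij (by rw [h]; ring)
      constructor
      · obtain ⟨h1, h2, h3⟩ := hsupp v i hiv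
        exact Finset.mem_filter.2 ⟨h2, h3⟩
      · obtain ⟨h1, h2, h3⟩ := hsupp v j hvj
        exact Finset.mem_filter.2 ⟨h2, h3⟩
    have hZ1suppC : ∀ i j, Z1 i j ≠ 0 → i ∈ C k₀ ∧ j ∈ C k₀ := by
      intro i j hij
      obtain ⟨h1, h2⟩ := hZ1supp i j hij
      exact ⟨hk₀ h1, hk₀ h2⟩
    set W1 := selector (C k₀) * Z1 * (selector (C k₀))ᵀ with hW1
    have hW1psd : W1.PosSemidef := psd_sel_sandwich hZ1psd
    have hW1recon : (selector (C k₀))ᵀ * W1 * selector (C k₀) = Z1 :=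
      selector_reconstruct hZ1suppC
    -- recurse on Z2
    have hZ2supp : ∀ i j, Z2 i j ≠ 0 → i ∈ s.erase v ∧ j ∈ s.erase v ∧ E i j := by
      intro i j hij
      have hiv : i ≠ v := fun h => hij (h ▸ hZ2vrow j)
      have hjv : j ≠ v := fun h => hij (h ▸ hZ2vcol i)
      have hor : Z i j ≠ 0 ∨ Z1 i j ≠ 0 := by
        by_contra h
        push_neg at h
        exact hij (by rw [hZ2, Matrix.sub_apply, h.1, h.2, sub_zero])
      rcases hor with h | h
      · obtain ⟨h1, h2, h3⟩ := hsupp i j h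
        exact ⟨Finset.mem_erase.2 ⟨hiv, h1⟩, Finset.mem_erase.2 ⟨hjv, h2⟩, h3⟩
      · obtain ⟨h1, h2⟩ := hZ1supp i j h
        have his : i ∈ s := (Finset.mem_filter.1 h1).1
        have hjs : j ∈ s := (Finset.mem_filter.1 h2).1
        refine ⟨Finset.mem_erase.2 ⟨hiv, his⟩, Finset.mem_erase.2 ⟨hjv, hjs⟩, ?_⟩
        by_cases hijeq : i = j
        · subst hijeq; exact hrefl i
        · exact hKclique i h1 j h2 hijeq
    obtain ⟨W2, hW2psd, hW2sum⟩ := IH (s.erase v) (Finset.erase_ssubset hvs) Z2 hZ2psd hZ2supp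
    set Wadd : (k : Fin p) → Matrix {x // x ∈ C k} {x // x ∈ C k} ℝ := Pi.single k₀ W1
      with hWadd
    refine ⟨fun k => W2 k + Wadd k, ?_, ?_⟩
    · intro k
      apply Matrix.PosSemidef.add (hW2psd k)
      by_cases hk : k = k₀
      · subst hk
        rw [hWadd, Pi.single_eq_same]
        exact hW1psd
      · rw [hWadd, Pi.single_eq_of_ne hk]
        exact Matrix.PosSemidef.zero
    · have hsplit : ∀ k : Fin p, (selector (C k))ᵀ * (W2 k + Wadd k) * selector (C k)
          = (selector (C k))ᵀ * W2 k * selector (C k)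
            + (selector (C k))ᵀ * Wadd k * selector (C k) := by
        intro k
        rw [Matrix.mul_add, Matrix.add_mul]
      rw [Finset.sum_congr rfl (fun k _ => hsplit k), Finset.sum_add_distrib, hW2sum]
      have hsingle : (∑ k, (selector (C k))ᵀ * Wadd k * selector (C k)) = Z1 := by
        rw [Finset.sum_eq_single k₀]
        · rw [hWadd, Pi.single_eq_same, hW1recon]
        · intro k _ hk
          rw [hWadd, Pi.single_eq_of_ne hk]
          simp
        · intro h
          exact absurd (Finset.mem_univ k₀) h
      rw [hsingle, hZ2]
      simp

end Decomp

/-- **Equivalence of the dual SDP and its chordal decomposition.** For data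
`C, A_1, …, A_m` supported on the edge set of a chordal graph with maximal
cliques `C_1, …, C_p`, the optimal value (supremum in the extended reals, `−∞`
if infeasible) of the dual SDP
`max ⟨b,y⟩ s.t. Σ_i A_i y_i + Z = C, Z ⪰ 0`
equals that of the decomposed problem
`max ⟨b,y⟩ s.t. Σ_i A_i y_i + Σ_k E_kᵀ Z_k E_k = C, Z_k ⪰ 0 for all k`. -/
theorem dual_sdp_chordal_decomposition {n p m : ℕ}
    (E : Fin n → Fin n → Prop) (hsym : Symmetric E)
    (hrefl : ∀ i, E i i) (hchordal : IsChordal E)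
    (C : Fin p → Finset (Fin n))
    (hmax : ∀ s, IsMaximalClique E s ↔ ∃ k, C k = s)
    (Cmat : Matrix (Fin n) (Fin n) ℝ) (A : Fin m → Matrix (Fin n) (Fin n) ℝ)
    (hCsym : Cmat.IsSymm) (hCsupp : ∀ i j, ¬ E i j → Cmat i j = 0)
    (hAsym : ∀ i, (A i).IsSymm) (hAsupp : ∀ i a b, ¬ E a b → A i a b = 0)
    (b : Fin m → ℝ) :
    sSup {v : EReal | ∃ (y : Fin m → ℝ) (Z : Matrix (Fin n) (Fin n) ℝ),
        Z.PosSemidef ∧ (∑ i, y i • A i) + Z = Cmat ∧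
        v = (∑ i, b i * y i : ℝ)} =
    sSup {v : EReal | ∃ (y : Fin m → ℝ)
        (Zk : (k : Fin p) → Matrix {x // x ∈ C k} {x // x ∈ C k} ℝ),
        (∀ k, (Zk k).PosSemidef) ∧
        (∑ i, y i • A i) + (∑ k, (selector (C k))ᵀ * Zk k * selector (C k)) = Cmat ∧
        v = (∑ i, b i * y i : ℝ)} := by
  classical
  set Adj : Fin n → Fin n → Prop := fun x y => E x y ∧ x ≠ y with hAdj
  have hsymA : Symmetric Adj := fun x y h => ⟨hsym h.1, Ne.symm h.2⟩
  have hirrA : ∀ x, ¬ Adj x x := fun x h => h.2 rfl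
  have hchA : IsChordal Adj := by
    intro k v hinj hadj
    obtain ⟨i, j, c1, c2, c3, hE⟩ := hchordal k v hinj (fun i => (hadj i).1)
    exact ⟨i, j, c1, c2, c3, hE, fun h => c1 (hinj h).symm⟩
  have hsimp : ∀ s : Finset (Fin n), s.Nonempty → ∃ v, SimpOn Adj s v := by
    intro s hs
    exact exists_simplicial hsymA hirrA hchA
      (fun {r t f g} => cycle_contradiction hsymA hchA)
      (fun {S x y} => exists_min_walk (A := Adj)) s hs
  have hseteq : {v : EReal | ∃ (y : Fin m → ℝ) (Z : Matrix (Fin n) (Fin n) ℝ),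
        Z.PosSemidef ∧ (∑ i, y i • A i) + Z = Cmat ∧
        v = (∑ i, b i * y i : ℝ)} =
      {v : EReal | ∃ (y : Fin m → ℝ)
        (Zk : (k : Fin p) → Matrix {x // x ∈ C k} {x // x ∈ C k} ℝ),
        (∀ k, (Zk k).PosSemidef) ∧
        (∑ i, y i • A i) + (∑ k, (selector (C k))ᵀ * Zk k * selector (C k)) = Cmat ∧
        v = (∑ i, b i * y i : ℝ)} := by
    ext w
    constructor
    · rintro ⟨y, Z, hZpsd, hZsum, rfl⟩
      have hZeq : Z = Cmat - (∑ i, y i • A i) := by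
        rw [← hZsum, add_sub_cancel_left]
      have hZsupp : ∀ a c, Z a c ≠ 0 →
          a ∈ (Finset.univ : Finset (Fin n)) ∧ c ∈ (Finset.univ : Finset (Fin n)) ∧ E a c := by
        intro a c hac
        refine ⟨Finset.mem_univ _, Finset.mem_univ _, ?_⟩
        by_contra hnE
        apply hac
        rw [hZeq, Matrix.sub_apply]
        have h1 : Cmat a c = 0 := hCsupp a c hnE
        have h2 : (∑ i, y i • A i) a c = 0 := by
          rw [Matrix.sum_apply]
          apply Finset.sum_eq_zero
          intro i _
          rw [Matrix.smul_apply, hAsupp i a c hnE, smul_zero]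
        rw [h1, h2, sub_zero]
      obtain ⟨W, hWpsd, hWsum⟩ :=
        decomp hsym hrefl hmax hsimp Finset.univ Z hZpsd hZsupp
      exact ⟨y, W, hWpsd, by rw [hWsum, hZsum], rfl⟩
    · rintro ⟨y, Zk, hZkpsd, hZksum, rfl⟩
      refine ⟨y, ∑ k, (selector (C k))ᵀ * Zk k * selector (C k), ?_, hZksum, rfl⟩
      apply Finset.sum_induction _ Matrix.PosSemidef
        (fun a b ha hb => ha.add hb) Matrix.PosSemidef.zero
      intro k _
      exact psd_selector_conj (hZkpsd k)
  rw [hseteq]
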